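/- Let (X,d) be a separable bounded metric space, {x_k}_{k=1}^∞ a countable dense subset, c > diam(X), and φ : X → Dgm_∞ the Bubenik–Wagner isometric embedding φ(x) = {(2c(k−1), 2ck + d(x,x_k))}_{k=1}^∞ into the space of persistence diagrams with the bottleneck distance w_∞. If x ∈ X is an accumulation point, then reach(φ(x), φ(X) ⊆ Dgm_∞) = 0. In particular, if X is not discrete, reach(φ(X) ⊆ Dgm_∞) = 0. Moreover, for any x ≠ y in X the diagram P = {(2c(k−1), 2ck + (d(x,x_k)+d(y,x_k))/2)}_{k=1}^∞ satisfies w_∞(φ(x), P) = w_∞(φ(y), P) = d(x,y)/2 and w_∞(φ(z), P) ≥ d(x,y)/2 for all z ∈ X, so P has at least two nearest points in φ(X). -/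

import Mathlib

open MeasureTheory ENNReal Set

noncomputable section

/-- Distance from a point to a set, with respect to a distance function `ρ`. -/
def distToSet {Y : Type*} (ρ : Y → Y → ℝ≥0∞) (y : Y) (A : Set Y) : ℝ≥0∞ :=
  ⨅ a ∈ A, ρ y a

/-- `y` has a unique (up to distance zero, i.e. unique in the metric quotient) metric
projection onto `A`, for the pseudo-distance `ρ`. -/
def HasUniqueProjMod {Y : Type*} (ρ : Y → Y → ℝ≥0∞) (A : Set Y) (y : Y) : Prop :=
  ∃ a, (a ∈ A ∧ ρ y a = distToSet ρ y A) ∧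
    ∀ b, b ∈ A → ρ y b = distToSet ρ y A → ρ a b = 0

/-- The reach of `A` at `a ∈ A`, within the ambient set `S`, for the pseudo-distance `ρ`. -/
def reachAtMod {Y : Type*} (ρ : Y → Y → ℝ≥0∞) (S A : Set Y) (a : Y) : ℝ≥0∞ :=
  sSup {r : ℝ≥0∞ | ∀ y ∈ S, ρ a y < r → HasUniqueProjMod ρ A y}

/-- The global reach of `A` within the ambient set `S`, for the pseudo-distance `ρ`. -/
def globalReachMod {Y : Type*} (ρ : Y → Y → ℝ≥0∞) (S A : Set Y) : ℝ≥0∞ :=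
  ⨅ a ∈ A, reachAtMod ρ S A a

/-- A persistence diagram: a function from a countable index set to
`ℝ²_< = {(a,b) : a < b}`. -/
structure PersistenceDiagram : Type 1 where
  ι : Type
  countable : Countable ι
  pts : ι → ℝ × ℝ
  lt : ∀ i, (pts i).1 < (pts i).2

/-- The `∞`-cost of a partial matching `(I₁, I₂, f)` between two persistence diagrams: the
maximum of the (sup) `ℓ∞`-distances between matched points and of the `ℓ∞`-distances from the
unmatched points to the diagonal (`d_∞(a,Δ) = (a₂ - a₁)/2`).  (On `ℝ × ℝ`, `edist` is the
`ℓ∞`/max distance.) -/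
def costBottleneck (D₁ D₂ : PersistenceDiagram) (I₁ : Set D₁.ι) (I₂ : Set D₂.ι)
    (f : I₁ → I₂) : ℝ≥0∞ :=
  max (⨆ i : I₁, edist (D₁.pts i.1) (D₂.pts (f i).1))
    (max (⨆ i : (I₁ᶜ : Set D₁.ι), ENNReal.ofReal (((D₁.pts i.1).2 - (D₁.pts i.1).1) / 2))
      (⨆ i : (I₂ᶜ : Set D₂.ι), ENNReal.ofReal (((D₂.pts i.1).2 - (D₂.pts i.1).1) / 2)))

/-- The bottleneck distance between two persistence diagrams: the infimum of the `∞`-costs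
over all partial matchings (bijections between subsets of the index sets). -/
def bottleneck (D₁ D₂ : PersistenceDiagram) : ℝ≥0∞ :=
  ⨅ (I₁ : Set D₁.ι) (I₂ : Set D₂.ι) (f : I₁ → I₂) (_ : Function.Bijective f),
    costBottleneck D₁ D₂ I₁ I₂ f

/-- The empty persistence diagram. -/
def emptyDiagram : PersistenceDiagram :=
  ⟨Empty, inferInstance, fun i => i.elim, fun i => i.elim⟩

/-- The space `Dgm_∞` of persistence diagrams at finite bottleneck distance from the empty
diagram (on which `bottleneck` is a distance after identifying diagrams at distance `0`). -/
def DgmInfty : Set PersistenceDiagram :=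
  {D | bottleneck D emptyDiagram ≠ ⊤}

/-- The Bubenik–Wagner embedding of a separable bounded metric space into `Dgm_∞`:
`x ↦ {(2c(k-1), 2ck + d(x, x_k))}_{k≥1}` for a dense sequence `(x_k)` and `c > diam X`
(indexed here by `k : ℕ` as `(2ck, 2c(k+1) + d(x, x_k))`). -/
def bwEmbed {X : Type*} [MetricSpace X] (c : ℝ) (hc : 0 < c) (xs : ℕ → X) (x : X) :
    PersistenceDiagram where
  ι := ℕ
  countable := inferInstance
  pts := fun k => (2 * c * k, 2 * c * (k + 1) + dist x (xs k))
  lt := fun k => by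
    have h : (0:ℝ) ≤ dist x (xs k) := dist_nonneg
    dsimp only
    nlinarith

/-- The midpoint diagram `P = {(2c(k-1), 2ck + (d(x,x_k) + d(y,x_k))/2)}_{k≥1}` associated to
a pair of points `x, y`. -/
def bwMid {X : Type*} [MetricSpace X] (c : ℝ) (hc : 0 < c) (xs : ℕ → X) (x y : X) :
    PersistenceDiagram where
  ι := ℕ
  countable := inferInstance
  pts := fun k => (2 * c * k, 2 * c * (k + 1) + (dist x (xs k) + dist y (xs k)) / 2)
  lt := fun k => by
    have h : (0:ℝ) ≤ dist x (xs k) := dist_nonneg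
    have h' : (0:ℝ) ≤ dist y (xs k) := dist_nonneg
    dsimp only
    nlinarith

/-!
All diagrams involved have exactly one point over each birth strip `[2ck, 2c(k+1))`, with
persistence at least `2c`. When the `k`-th death values of two such diagrams differ by at most
`c` (guaranteed by `c > diam X`), no matching beats the one pairing the `k`-th points: leaving a
point unmatched costs at least `c`, and matching points of different strips costs at least `2c`.
So the bottleneck distance is the supremum over `k` of the differences of the death values: a
supremum along a dense sequence of a continuous function on `X`, i.e. its supremum over `X`.
Hence `φ` is an isometry, `w_∞(φ z, P) ≥ (d(x,z) + d(y,z))/2 ≥ d(x,y)/2` (evaluate at `z`), and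
`w_∞(φ x, P) = w_∞(φ y, P) = d(x,y)/2` since `|d(x,p) - d(y,p)| ≤ d(x,y)`. So `P` has the two
nearest points `φ x ≠ φ y` in `φ(X)` and lies within `d(x,y)/2` of `φ x`; letting `y → x`
gives reach `0` at an accumulation point.
-/

section Reach

variable {Y : Type*} {ρ : Y → Y → ℝ≥0∞} {S A : Set Y}

theorem distToSet_eq_of_forall_le {y a : Y} (ha : a ∈ A) (h : ∀ b ∈ A, ρ y a ≤ ρ y b) :
    distToSet ρ y A = ρ y a :=
  le_antisymm (iInf₂_le a ha) (le_iInf₂ h)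

theorem not_hasUniqueProjMod_of_two_nearest {y a b : Y} (ha : a ∈ A) (hb : b ∈ A)
    (hya : ρ y a = distToSet ρ y A) (hyb : ρ y b = distToSet ρ y A)
    (hab : ∀ p ∈ A, ρ p a = 0 → ρ p b ≠ 0) : ¬ HasUniqueProjMod ρ A y := by
  rintro ⟨p, ⟨hp, -⟩, huniq⟩
  exact hab p hp (huniq a ha hya) (huniq b hb hyb)

theorem reachAtMod_eq_zero_of_forall_lt {a : Y}
    (h : ∀ r > 0, ∃ y ∈ S, ρ a y < r ∧ ¬ HasUniqueProjMod ρ A y) :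
    reachAtMod ρ S A a = 0 := by
  refine nonpos_iff_eq_zero.mp (sSup_le fun r hr => not_lt.mp fun hr0 => ?_)
  obtain ⟨y, hyS, hyr, hy⟩ := h r hr0
  exact hy (hr y hyS hyr)

end Reach

theorem bottleneck_emptyDiagram_le (D : PersistenceDiagram) :
    bottleneck D emptyDiagram ≤ ⨆ i, ENNReal.ofReal (((D.pts i).2 - (D.pts i).1) / 2) := by
  let f : (∅ : Set D.ι) → (univ : Set emptyDiagram.ι) := fun i => (notMem_empty _ i.2).elim
  have hf : Function.Bijective f := ⟨fun i => (notMem_empty _ i.2).elim, fun j => j.1.elim⟩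
  refine (iInf₂_le (∅ : Set D.ι) (univ : Set emptyDiagram.ι)).trans <|
    (iInf₂_le f hf).trans ?_
  refine max_le (iSup_le fun i => (notMem_empty _ i.2).elim) (max_le ?_ ?_)
  · exact iSup_le fun i => le_iSup_of_le i.1 le_rfl
  · exact iSup_le fun j => j.1.elim

theorem le_iSup_comp_of_denseRange {ι X α : Type*} [TopologicalSpace X] [CompleteLattice α]
    [TopologicalSpace α] [OrderClosedTopology α] {xs : ι → X} (hxs : DenseRange xs)
    {f : X → α} (hf : Continuous f) (p : X) : f p ≤ ⨆ k, f (xs k) :=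
  hxs.induction_on p (isClosed_le hf continuous_const) fun k => le_iSup (f ∘ xs) k

def stripDiagram (c : ℝ) (hc : 0 < c) (u : ℕ → ℝ) (hu : ∀ k, 0 ≤ u k) :
    PersistenceDiagram where
  ι := ℕ
  countable := inferInstance
  pts := fun k => (2 * c * k, 2 * c * (k + 1) + u k)
  lt := fun k => by
    dsimp only
    nlinarith [hu k]

section StripDiagram

variable {c : ℝ} {hc : 0 < c} {u v : ℕ → ℝ} {hu : ∀ k, 0 ≤ u k} {hv : ∀ k, 0 ≤ v k}

theorem edist_stripDiagram_pts (k : ℕ) :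
    edist ((stripDiagram c hc u hu).pts k) ((stripDiagram c hc v hv).pts k)
      = ENNReal.ofReal |u k - v k| := by
  rw [Prod.edist_eq]
  simp only [stripDiagram, edist_dist, Real.dist_eq, sub_self, abs_zero, ENNReal.ofReal_zero,
    add_sub_add_left_eq_sub, zero_max]

theorem ofReal_le_edist_stripDiagram_pts {k j : ℕ} (hkj : k ≠ j) :
    ENNReal.ofReal (2 * c)
      ≤ edist ((stripDiagram c hc u hu).pts k) ((stripDiagram c hc v hv).pts j) := by
  have hkj' : (1 : ℝ) ≤ |(k : ℝ) - j| := by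
    exact_mod_cast Int.one_le_abs (sub_ne_zero.mpr (Int.natCast_inj.not.mpr hkj))
  rw [Prod.edist_eq, edist_dist, Real.dist_eq]
  refine le_max_of_le_left (ENNReal.ofReal_le_ofReal ?_)
  show 2 * c ≤ |2 * c * (k : ℝ) - 2 * c * j|
  rw [show 2 * c * (k : ℝ) - 2 * c * j = 2 * c * (k - j) by ring, abs_mul,
    abs_of_pos (by positivity : 0 < 2 * c)]
  nlinarith

theorem ofReal_le_persistence_stripDiagram (k : ℕ) :
    ENNReal.ofReal c ≤ ENNReal.ofReal
      ((((stripDiagram c hc u hu).pts k).2 - ((stripDiagram c hc u hu).pts k).1) / 2) := by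
  refine ENNReal.ofReal_le_ofReal ?_
  simp only [stripDiagram]
  linarith [hu k]

theorem ofReal_abs_sub_le_costBottleneck_stripDiagram {I₁ : Set (stripDiagram c hc u hu).ι}
    {I₂ : Set (stripDiagram c hc v hv).ι} (f : I₁ → I₂)
    (huv : ∀ k, |u k - v k| ≤ c) (k : ℕ) :
    ENNReal.ofReal |u k - v k|
      ≤ costBottleneck (stripDiagram c hc u hu) (stripDiagram c hc v hv) I₁ I₂ f := by
  by_cases hk : k ∈ I₁
  · refine le_max_of_le_left (le_iSup_of_le ⟨k, hk⟩ ?_)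
    by_cases hfk : (f ⟨k, hk⟩).1 = k
    · rw [hfk, edist_stripDiagram_pts]
    · exact (ENNReal.ofReal_le_ofReal (by linarith [huv k])).trans
        (ofReal_le_edist_stripDiagram_pts (Ne.symm hfk))
  · refine le_max_of_le_right (le_max_of_le_left (le_iSup_of_le ⟨k, hk⟩ ?_))
    exact (ENNReal.ofReal_le_ofReal (huv k)).trans (ofReal_le_persistence_stripDiagram k)

theorem bottleneck_stripDiagram_le :
    bottleneck (stripDiagram c hc u hu) (stripDiagram c hc v hv)
      ≤ ⨆ k, ENNReal.ofReal |u k - v k| := by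
  refine (iInf₂_le univ univ).trans <| (iInf₂_le id Function.bijective_id).trans ?_
  refine max_le (iSup_le fun k => ?_) (max_le ?_ ?_)
  · exact (edist_stripDiagram_pts k.1).trans_le (le_iSup_of_le k.1 le_rfl)
  all_goals exact iSup_le fun k => (k.2 (mem_univ _)).elim

theorem bottleneck_stripDiagram (hu' : ∀ k, u k ≤ c) (hv' : ∀ k, v k ≤ c) :
    bottleneck (stripDiagram c hc u hu) (stripDiagram c hc v hv)
      = ⨆ k, ENNReal.ofReal |u k - v k| := by
  have huv k : |u k - v k| ≤ c := abs_sub_le_of_nonneg_of_le (hu k) (hu' k) (hv k) (hv' k)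
  refine le_antisymm bottleneck_stripDiagram_le ?_
  exact le_iInf fun I₁ => le_iInf fun I₂ => le_iInf fun f => le_iInf fun _ =>
    iSup_le (ofReal_abs_sub_le_costBottleneck_stripDiagram f huv)

theorem stripDiagram_mem_dgmInfty {M : ℝ} (hM : ∀ k, u k ≤ M) :
    stripDiagram c hc u hu ∈ DgmInfty := by
  refine ne_top_of_le_ne_top (ENNReal.ofReal_ne_top (r := c + M / 2))
    ((bottleneck_emptyDiagram_le _).trans (iSup_le fun k => ENNReal.ofReal_le_ofReal ?_))
  simp only [stripDiagram]
  linarith [hM k]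

end StripDiagram

section BubenikWagner

variable {X : Type*} [MetricSpace X] {xs : ℕ → X} {c : ℝ} {hc0 : 0 < c}

theorem bwEmbed_eq_stripDiagram (x : X) :
    bwEmbed c hc0 xs x = stripDiagram c hc0 (fun k => dist x (xs k)) fun _ => dist_nonneg :=
  rfl

theorem bwMid_eq_stripDiagram (x y : X) :
    bwMid c hc0 xs x y = stripDiagram c hc0 (fun k => (dist x (xs k) + dist y (xs k)) / 2)
      fun _ => by positivity :=
  rfl

theorem bwMid_comm (x y : X) : bwMid c hc0 xs x y = bwMid c hc0 xs y x := by
  rw [bwMid_eq_stripDiagram, bwMid_eq_stripDiagram]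
  congr 1
  funext k
  ring

variable (hdense : DenseRange xs) (hdist : ∀ a b : X, dist a b ≤ c)
include hdist

theorem bottleneck_bwEmbed_bwMid (z x y : X) :
    bottleneck (bwEmbed c hc0 xs z) (bwMid c hc0 xs x y)
      = ⨆ k, ENNReal.ofReal |dist z (xs k) - (dist x (xs k) + dist y (xs k)) / 2| := by
  rw [bwEmbed_eq_stripDiagram, bwMid_eq_stripDiagram, bottleneck_stripDiagram fun _ => hdist _ _]
  intro k
  linarith [hdist x (xs k), hdist y (xs k)]

theorem bottleneck_bwMid_bwEmbed (x y z : X) :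
    bottleneck (bwMid c hc0 xs x y) (bwEmbed c hc0 xs z)
      = bottleneck (bwEmbed c hc0 xs z) (bwMid c hc0 xs x y) := by
  rw [bottleneck_bwEmbed_bwMid hdist, bwEmbed_eq_stripDiagram, bwMid_eq_stripDiagram,
    bottleneck_stripDiagram _ fun _ => hdist _ _]
  · simp only [abs_sub_comm]
  · intro k
    linarith [hdist x (xs k), hdist y (xs k)]

theorem bottleneck_bwEmbed_bwMid_left_le (x y : X) :
    bottleneck (bwEmbed c hc0 xs x) (bwMid c hc0 xs x y) ≤ ENNReal.ofReal (dist x y / 2) := by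
  rw [bottleneck_bwEmbed_bwMid hdist]
  refine iSup_le fun k => ENNReal.ofReal_le_ofReal ?_
  rw [show dist x (xs k) - (dist x (xs k) + dist y (xs k)) / 2
      = (dist x (xs k) - dist y (xs k)) / 2 by ring, abs_div, abs_two]
  linarith [abs_dist_sub_le x y (xs k)]

include hdense

theorem bottleneck_bwEmbed_bwEmbed (a b : X) :
    bottleneck (bwEmbed c hc0 xs a) (bwEmbed c hc0 xs b) = ENNReal.ofReal (dist a b) := by
  rw [bwEmbed_eq_stripDiagram, bwEmbed_eq_stripDiagram,
    bottleneck_stripDiagram (fun _ => hdist _ _) fun _ => hdist _ _]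
  refine le_antisymm (iSup_le fun k => ENNReal.ofReal_le_ofReal (abs_dist_sub_le a b (xs k))) ?_
  simpa using le_iSup_comp_of_denseRange hdense
    (f := fun p => ENNReal.ofReal |dist a p - dist b p|)
    (ENNReal.continuous_ofReal.comp (by fun_prop)) b

theorem ofReal_half_dist_le_bottleneck_bwEmbed_bwMid (x y z : X) :
    ENNReal.ofReal (dist x y / 2) ≤ bottleneck (bwEmbed c hc0 xs z) (bwMid c hc0 xs x y) := by
  rw [bottleneck_bwEmbed_bwMid hdist]
  refine le_trans ?_ (le_iSup_comp_of_denseRange hdense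
    (f := fun p => ENNReal.ofReal |dist z p - (dist x p + dist y p) / 2|)
    (ENNReal.continuous_ofReal.comp (by fun_prop)) z)
  refine ENNReal.ofReal_le_ofReal ?_
  rw [dist_self, zero_sub, abs_neg]
  linarith [dist_triangle_right x y z, le_abs_self ((dist x z + dist y z) / 2)]

theorem bottleneck_bwEmbed_left_bwMid (x y : X) :
    bottleneck (bwEmbed c hc0 xs x) (bwMid c hc0 xs x y) = ENNReal.ofReal (dist x y / 2) :=
  le_antisymm (bottleneck_bwEmbed_bwMid_left_le hdist x y)
    (ofReal_half_dist_le_bottleneck_bwEmbed_bwMid hdense hdist x y x)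

theorem bottleneck_bwEmbed_right_bwMid (x y : X) :
    bottleneck (bwEmbed c hc0 xs y) (bwMid c hc0 xs x y) = ENNReal.ofReal (dist x y / 2) := by
  rw [bwMid_comm, dist_comm]
  exact bottleneck_bwEmbed_left_bwMid hdense hdist y x

theorem distToSet_bwMid_range_bwEmbed (x y : X) :
    distToSet bottleneck (bwMid c hc0 xs x y) (range (bwEmbed c hc0 xs))
      = ENNReal.ofReal (dist x y / 2) := by
  rw [distToSet_eq_of_forall_le (mem_range_self x), bottleneck_bwMid_bwEmbed hdist,
    bottleneck_bwEmbed_left_bwMid hdense hdist]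
  rintro _ ⟨z, rfl⟩
  rw [bottleneck_bwMid_bwEmbed hdist, bottleneck_bwMid_bwEmbed hdist,
    bottleneck_bwEmbed_left_bwMid hdense hdist]
  exact ofReal_half_dist_le_bottleneck_bwEmbed_bwMid hdense hdist x y z

theorem not_hasUniqueProjMod_bwMid {x y : X} (hxy : x ≠ y) :
    ¬ HasUniqueProjMod bottleneck (range (bwEmbed c hc0 xs)) (bwMid c hc0 xs x y) := by
  refine not_hasUniqueProjMod_of_two_nearest ⟨x, rfl⟩ ⟨y, rfl⟩ ?_ ?_ ?_
  · rw [distToSet_bwMid_range_bwEmbed hdense hdist, bottleneck_bwMid_bwEmbed hdist,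
      bottleneck_bwEmbed_left_bwMid hdense hdist]
  · rw [distToSet_bwMid_range_bwEmbed hdense hdist, bottleneck_bwMid_bwEmbed hdist,
      bottleneck_bwEmbed_right_bwMid hdense hdist]
  · rintro _ ⟨z, rfl⟩ hzx hzy
    rw [bottleneck_bwEmbed_bwEmbed hdense hdist, ENNReal.ofReal_eq_zero, dist_le_zero] at hzx hzy
    exact hxy (hzx.symm.trans hzy)

theorem reachAtMod_range_bwEmbed_eq_zero {x : X} (hx : ∀ ε > 0, ∃ y ≠ x, dist x y < ε) :
    reachAtMod bottleneck DgmInfty (range (bwEmbed c hc0 xs)) (bwEmbed c hc0 xs x) = 0 := by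
  refine reachAtMod_eq_zero_of_forall_lt fun r hr => ?_
  obtain ⟨ε, -, hε, hεr⟩ := ENNReal.lt_iff_exists_real_btwn.mp hr
  obtain ⟨y, hyx, hxy⟩ := hx ε (ENNReal.ofReal_pos.mp hε)
  refine ⟨bwMid c hc0 xs x y, ?_, ?_, not_hasUniqueProjMod_bwMid hdense hdist hyx.symm⟩
  · rw [bwMid_eq_stripDiagram]
    exact stripDiagram_mem_dgmInfty (M := c) fun k => by
      linarith [hdist x (xs k), hdist y (xs k)]
  · rw [bottleneck_bwEmbed_left_bwMid hdense hdist]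
    exact (ENNReal.ofReal_le_ofReal (by linarith [dist_nonneg (x := x) (y := y)])).trans_lt hεr

end BubenikWagner

/-- Let `X` be a separable bounded metric space, `(x_k)` a dense sequence,
`c > diam X`, and `φ = bwEmbed` the Bubenik–Wagner isometric embedding of `X` into
`(Dgm_∞, w_∞)`.  If `x` is an accumulation point of `X` then the reach of `φ(X)` at `φ(x)`
is zero; in particular if `X` is not discrete the global reach of `φ(X)` in `Dgm_∞` is zero.
Moreover, for any `x' ≠ y'` the diagram `P = bwMid c x' y'` satisfies
`w_∞(φ(x'), P) = w_∞(φ(y'), P) = d(x',y')/2` and `w_∞(φ(z), P) ≥ d(x',y')/2` for all `z`,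
so `P` has at least two nearest points in `φ(X)`. -/
theorem reach_zero_in_persistence_diagrams {X : Type*} [MetricSpace X]
    (hbdd : Bornology.IsBounded (Set.univ : Set X))
    (xs : ℕ → X) (hdense : DenseRange xs)
    (c : ℝ) (hc : Metric.diam (Set.univ : Set X) < c) (hc0 : 0 < c)
    (x : X) (hx : ∀ ε : ℝ, 0 < ε → ∃ y : X, y ≠ x ∧ dist x y < ε) :
    reachAtMod bottleneck DgmInfty (Set.range (bwEmbed c hc0 xs))
        (bwEmbed c hc0 xs x) = 0 ∧
    globalReachMod bottleneck DgmInfty (Set.range (bwEmbed c hc0 xs)) = 0 ∧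
    ∀ x' y' : X, x' ≠ y' →
      bottleneck (bwEmbed c hc0 xs x') (bwMid c hc0 xs x' y')
          = ENNReal.ofReal (dist x' y' / 2) ∧
      bottleneck (bwEmbed c hc0 xs y') (bwMid c hc0 xs x' y')
          = ENNReal.ofReal (dist x' y' / 2) ∧
      ∀ z : X, ENNReal.ofReal (dist x' y' / 2)
          ≤ bottleneck (bwEmbed c hc0 xs z) (bwMid c hc0 xs x' y') := by
  have hdist (a b : X) : dist a b ≤ c :=
    (Metric.dist_le_diam_of_mem hbdd (mem_univ a) (mem_univ b)).trans hc.le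
  have hreach := reachAtMod_range_bwEmbed_eq_zero (hc0 := hc0) hdense hdist hx
  refine ⟨hreach, nonpos_iff_eq_zero.mp (hreach ▸ iInf₂_le _ ⟨x, rfl⟩), fun x' y' _ => ?_⟩
  exact ⟨bottleneck_bwEmbed_left_bwMid hdense hdist x' y',
    bottleneck_bwEmbed_right_bwMid hdense hdist x' y',
    ofReal_half_dist_le_bottleneck_bwEmbed_bwMid hdense hdist x' y'⟩
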